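/- arXiv:2511.14180 — 7 statements merged into one kernel-verified Lean document; each statement's English description precedes it below -/
import Mathlib

section
/- Let n ≥ 1 and c : ZMod n → ℕ satisfy c(a) ≥ 1 and c(a+1) + 1 ≥ c(a) for all a, and define γ(a) = a + c(a). If a and b are periodic points of γ with minimal periods k and l respectively, then k = l. -/
/-- The resolution quiver map of a Nakayama algebra. -/
def gam (n : ℕ) (c : ZMod n → ℕ) : ZMod n → ZMod n := fun a => a + (c a : ZMod n)

namespace Stmt3Aux

/-- The lift of `gam` to the integers. -/
def F (n : ℕ) (c : ZMod n → ℕ) : ℤ → ℤ := fun x => x + (c (x : ZMod n) : ℤ)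

variable {n : ℕ} {c : ZMod n → ℕ}

lemma F_mono (h2 : ∀ a, c a ≤ c (a + 1) + 1) : Monotone (F n c) := by
  apply monotone_int_of_le_succ
  intro x
  have := h2 (x : ZMod n)
  have hc : ((x + 1 : ℤ) : ZMod n) = (x : ZMod n) + 1 := by push_cast; ring
  simp only [F, hc]
  have : (c (x : ZMod n) : ℤ) ≤ (c ((x : ZMod n) + 1) : ℤ) + 1 := by exact_mod_cast this
  linarith

lemma F_ge (h1 : ∀ a, 1 ≤ c a) (x : ℤ) : x + 1 ≤ F n c x := by
  have := h1 (x : ZMod n)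
  have : (1 : ℤ) ≤ (c (x : ZMod n) : ℤ) := by exact_mod_cast this
  simp only [F]; linarith

lemma F_add_mul (x t : ℤ) : F n c (x + t * n) = F n c x + t * n := by
  have hc : ((x + t * n : ℤ) : ZMod n) = (x : ZMod n) := by
    push_cast; simp [ZMod.natCast_self]
  simp only [F, hc]; ring

lemma itF_add_mul (k : ℕ) (x t : ℤ) : (F n c)^[k] (x + t * n) = (F n c)^[k] x + t * n := by
  induction k generalizing x with
  | zero => simp
  | succ m ih =>
    rw [Function.iterate_succ_apply, Function.iterate_succ_apply, F_add_mul, ih]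

lemma itF_cast (k : ℕ) (x : ℤ) :
    (((F n c)^[k] x : ℤ) : ZMod n) = (gam n c)^[k] (x : ZMod n) := by
  induction k generalizing x with
  | zero => simp
  | succ m ih =>
    rw [Function.iterate_succ_apply, Function.iterate_succ_apply, ih]
    congr 1
    simp only [F, gam]; push_cast; ring

lemma itF_ge (h1 : ∀ a, 1 ≤ c a) (k : ℕ) (x : ℤ) : x + k ≤ (F n c)^[k] x := by
  induction k generalizing x with
  | zero => simp
  | succ m ih =>
    rw [Function.iterate_succ_apply]
    have := ih (F n c x)
    have := F_ge h1 x
    push_cast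
    push_cast at ih this
    linarith [ih]

/-- A monotone map with `g x ≤ x` has all iterates of `g x` at most `g x`. -/
lemma iter_le (g : ℤ → ℤ) (hg : Monotone g) {x : ℤ} (h : g x ≤ x) (m : ℕ) :
    g^[m] (g x) ≤ g x := by
  induction m with
  | zero => simp
  | succ p ih =>
    rw [Function.iterate_succ_apply]
    calc g^[p] (g (g x)) ≤ g^[p] (g x) := (hg.iterate p) (hg h)
      _ ≤ g x := ih

lemma iter_ge (g : ℤ → ℤ) (hg : Monotone g) {x : ℤ} (h : x ≤ g x) (m : ℕ) :
    g x ≤ g^[m] (g x) := by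
  induction m with
  | zero => simp
  | succ p ih =>
    rw [Function.iterate_succ_apply]
    calc g x ≤ g^[p] (g x) := ih
      _ ≤ g^[p] (g (g x)) := (hg.iterate p) (hg h)

/-- A periodic point of a monotone map `ℤ → ℤ` is a fixed point. -/
lemma fix_of_periodic (g : ℤ → ℤ) (hg : Monotone g) {d : ℕ} (hd : 1 ≤ d) {x : ℤ}
    (h : g^[d] x = x) : g x = x := by
  rcases lt_trichotomy (g x) x with hlt | heq | hgt
  · exfalso
    obtain ⟨m, rfl⟩ : ∃ m, d = m + 1 := ⟨d - 1, by omega⟩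
    rw [Function.iterate_succ_apply] at h
    have := iter_le g hg hlt.le m
    omega
  · exact heq
  · exfalso
    obtain ⟨m, rfl⟩ : ∃ m, d = m + 1 := ⟨d - 1, by omega⟩
    rw [Function.iterate_succ_apply] at h
    have := iter_ge g hg hgt.le m
    omega

lemma lift_periodic (hn : 1 ≤ n) (h1 : ∀ a, 1 ≤ c a) {k : ℕ} (hk : 1 ≤ k) {A : ℤ}
    (h : (gam n c)^[k] (A : ZMod n) = (A : ZMod n)) :
    ∃ s : ℕ, 1 ≤ s ∧ (F n c)^[k] A = A + (s : ℤ) * n := by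
  have hc : (((F n c)^[k] A : ℤ) : ZMod n) = (A : ZMod n) := by rw [itF_cast, h]
  have hdvd : (n : ℤ) ∣ (F n c)^[k] A - A := by
    have h0 : (((F n c)^[k] A - A : ℤ) : ZMod n) = 0 := by
      push_cast
      rw [hc]
      ring
    exact (ZMod.intCast_zmod_eq_zero_iff_dvd _ n).mp h0
  obtain ⟨s, hs⟩ := hdvd
  have hge := itF_ge h1 k A
  have hn' : (1 : ℤ) ≤ n := by exact_mod_cast hn
  have hk' : (1 : ℤ) ≤ k := by exact_mod_cast hk
  have hspos : 1 ≤ s := by nlinarith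
  refine ⟨s.toNat, by omega, ?_⟩
  have : ((s.toNat : ℤ)) = s := Int.toNat_of_nonneg (by omega)
  rw [this]
  linarith

lemma iterate_lift {k : ℕ} {A : ℤ} {s : ℕ} (hF : (F n c)^[k] A = A + (s : ℤ) * n) (m : ℕ) :
    (F n c)^[k * m] A = A + ((m * s : ℕ) : ℤ) * n := by
  induction m with
  | zero => simp
  | succ p ih =>
    have : k * (p + 1) = k + k * p := by ring
    rw [this, Function.iterate_add_apply, ih]
    have h2' : A + ((p * s : ℕ) : ℤ) * n = A + ((p * s : ℕ) : ℤ) * n := rfl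
    rw [show A + ((p * s : ℕ) : ℤ) * n = A + ((p * s : ℕ) : ℤ) * (n : ℤ) from rfl,
      itF_add_mul, hF]
    push_cast
    ring

lemma coprime_lemma (hn : 1 ≤ n) (h1 : ∀ a, 1 ≤ c a) (h2 : ∀ a, c a ≤ c (a + 1) + 1)
    {A : ℤ} {s : ℕ}
    (ha : (A : ZMod n) ∈ Function.periodicPts (gam n c))
    (hF : (F n c)^[Function.minimalPeriod (gam n c) (A : ZMod n)] A = A + (s : ℤ) * n) :
    Nat.Coprime s (Function.minimalPeriod (gam n c) (A : ZMod n)) := by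
  set k := Function.minimalPeriod (gam n c) (A : ZMod n) with hkdef
  have kpos : 0 < k := Function.minimalPeriod_pos_of_mem_periodicPts ha
  set d := Nat.gcd s k with hddef
  have dpos : 0 < d := Nat.gcd_pos_of_pos_right _ kpos
  obtain ⟨s', hs'⟩ : d ∣ s := Nat.gcd_dvd_left _ _
  obtain ⟨k', hk'⟩ : d ∣ k := Nat.gcd_dvd_right _ _
  have k'pos : 0 < k' := by
    rcases Nat.eq_zero_or_pos k' with h | h
    · exfalso; rw [h, Nat.mul_zero] at hk'; omega
    · exact h
  set g : ℤ → ℤ := fun x => (F n c)^[k'] x - (s' : ℤ) * n with hgdef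
  have hgmono : Monotone g := by
    intro x y hxy
    simp only [hgdef]
    have := (F_mono h2).iterate k' hxy
    linarith
  have hgit : ∀ m x, g^[m] x = (F n c)^[k' * m] x - ((m * s' : ℕ) : ℤ) * n := by
    intro m
    induction m with
    | zero => intro x; simp
    | succ p ih =>
      intro x
      rw [Function.iterate_succ_apply', ih, hgdef]
      simp only
      have heq : (F n c)^[k' * p] x - ((p * s' : ℕ) : ℤ) * n
          = (F n c)^[k' * p] x + (-((p * s' : ℕ) : ℤ)) * n := by ring
      rw [heq, itF_add_mul, show k' * (p + 1) = k' + k' * p from by ring,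
        Function.iterate_add_apply]
      push_cast
      ring
  have hgd : g^[d] A = A := by
    rw [hgit d A, show k' * d = k from by rw [hk']; ring]
    rw [show (d * s' : ℕ) = s from hs'.symm, hF]
    ring
  have hfix := fix_of_periodic g hgmono dpos hgd
  have hF' : (F n c)^[k'] A = A + (s' : ℤ) * n := by
    simp only [hgdef] at hfix
    linarith
  have hper : (gam n c)^[k'] (A : ZMod n) = (A : ZMod n) := by
    have := itF_cast (n := n) (c := c) k' A
    rw [hF'] at this
    rw [← this]
    push_cast
    simp
  have hdvd : k ∣ k' := Function.IsPeriodicPt.minimalPeriod_dvd hper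
  have hk'k : k' = k := Nat.dvd_antisymm ⟨d, by rw [hk']; ring⟩ hdvd
  have hd1 : d = 1 := by
    rw [hk'k] at hk'
    have : d * k = 1 * k := by rw [one_mul]; exact hk'.symm
    exact Nat.eq_of_mul_eq_mul_right kpos this
  exact hd1

lemma key (hn : 1 ≤ n) (h1 : ∀ a, 1 ≤ c a) (h2 : ∀ a, c a ≤ c (a + 1) + 1) {A B : ℤ}
    (ha : (A : ZMod n) ∈ Function.periodicPts (gam n c))
    (hb : (B : ZMod n) ∈ Function.periodicPts (gam n c))
    (hAB : A < B) (hBA : B < A + n) :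
    Function.minimalPeriod (gam n c) (A : ZMod n)
      = Function.minimalPeriod (gam n c) (B : ZMod n) := by
  set k := Function.minimalPeriod (gam n c) (A : ZMod n) with hkdef
  set l := Function.minimalPeriod (gam n c) (B : ZMod n) with hldef
  have kpos : 0 < k := Function.minimalPeriod_pos_of_mem_periodicPts ha
  have lpos : 0 < l := Function.minimalPeriod_pos_of_mem_periodicPts hb
  obtain ⟨s, hs1, hsF⟩ := lift_periodic hn h1 kpos (Function.isPeriodicPt_minimalPeriod _ _)
  obtain ⟨t, ht1, htF⟩ := lift_periodic hn h1 lpos (Function.isPeriodicPt_minimalPeriod _ _)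
  have cops : Nat.Coprime s k := coprime_lemma hn h1 h2 ha hsF
  have copt : Nat.Coprime t l := coprime_lemma hn h1 h2 hb htF
  have eA : (F n c)^[k * l] A = A + ((l * s : ℕ) : ℤ) * n := iterate_lift hsF l
  have eB : (F n c)^[k * l] B = B + ((k * t : ℕ) : ℤ) * n := by
    rw [show k * l = l * k from by ring]
    exact iterate_lift htF k
  have hmono := (F_mono (n := n) (c := c) h2).iterate (k * l)
  have m1 : (F n c)^[k * l] A ≤ (F n c)^[k * l] B := hmono hAB.le
  have m2 : (F n c)^[k * l] B ≤ (F n c)^[k * l] (A + 1 * n) := hmono (by linarith)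
  rw [itF_add_mul] at m2
  rw [eA, eB] at m1 m2
  have hn' : (1 : ℤ) ≤ n := by exact_mod_cast hn
  set u : ℤ := ((l * s : ℕ) : ℤ) with hudef
  set v : ℤ := ((k * t : ℕ) : ℤ) with hvdef
  have huv : u = v := by
    rcases lt_trichotomy u v with h | h | h
    · exfalso
      have : 1 * (n : ℤ) ≤ (v - u) * n := by
        apply mul_le_mul_of_nonneg_right (by omega) (by linarith)
      nlinarith
    · exact h
    · exfalso
      have : 1 * (n : ℤ) ≤ (u - v) * n := by
        apply mul_le_mul_of_nonneg_right (by omega) (by linarith)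
      nlinarith
  have hnat : l * s = k * t := by
    rw [hudef, hvdef] at huv
    exact_mod_cast huv
  have hkl : k ∣ l := by
    refine (Nat.Coprime.dvd_of_dvd_mul_right cops.symm) ?_
    exact ⟨t, hnat⟩
  have hlk : l ∣ k := by
    refine (Nat.Coprime.dvd_of_dvd_mul_right copt.symm) ?_
    exact ⟨s, hnat.symm⟩
  exact Nat.dvd_antisymm hkl hlk

end Stmt3Aux

/-- All cycles of the resolution quiver have the same length. -/
theorem stmt3 (n : ℕ) (hn : 1 ≤ n) (c : ZMod n → ℕ)
    (h1 : ∀ a, 1 ≤ c a) (h2 : ∀ a, c a ≤ c (a + 1) + 1)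
    (a b : ZMod n)
    (ha : a ∈ Function.periodicPts (gam n c))
    (hb : b ∈ Function.periodicPts (gam n c)) :
    Function.minimalPeriod (gam n c) a = Function.minimalPeriod (gam n c) b := by
  haveI : NeZero n := ⟨by omega⟩
  set A : ℤ := (a.val : ℤ) with hAdef
  set B : ℤ := (b.val : ℤ) with hBdef
  have hA : ((A : ℤ) : ZMod n) = a := by
    rw [hAdef]; push_cast; exact ZMod.natCast_rightInverse a
  have hB : ((B : ℤ) : ZMod n) = b := by
    rw [hBdef]; push_cast; exact ZMod.natCast_rightInverse b
  have hA0 : 0 ≤ A := by positivity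
  have hB0 : 0 ≤ B := by positivity
  have hAn : A < n := by rw [hAdef]; exact_mod_cast ZMod.val_lt a
  have hBn : B < n := by rw [hBdef]; exact_mod_cast ZMod.val_lt b
  rcases lt_trichotomy A B with h | h | h
  · rw [← hA, ← hB]
    exact Stmt3Aux.key hn h1 h2 (by rwa [hA]) (by rwa [hB]) h (by linarith)
  · have : a = b := by rw [← hA, ← hB, h]
    rw [this]
  · rw [← hA, ← hB]
    exact (Stmt3Aux.key hn h1 h2 (by rwa [hB]) (by rwa [hA]) h (by linarith)).symm
end

section
/- Let n ≥ 1 and c : ZMod n → ℕ satisfy c(a) ≥ 1 and c(a+1) + 1 ≥ c(a) for all a, and define γ(a) = a + c(a). If a and b are periodic points of γ with minimal periods k and l respectively, then ∑_{i=0}^{k-1} c(γ^i(a)) = ∑_{j=0}^{l-1} c(γ^j(b)). -/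
namespace Stmt4Aux
open Function Finset

/-- The lift of `gam` to the natural numbers. -/
def Cl (n : ℕ) (c : ZMod n → ℕ) : ℕ → ℕ := fun x => x + c (x : ZMod n)

lemma cl_cast (n : ℕ) (c : ZMod n → ℕ) (x : ℕ) :
    ((Cl n c x : ℕ) : ZMod n) = gam n c (x : ZMod n) := by
  simp [Cl, gam]

lemma cl_mono (n : ℕ) (c : ZMod n → ℕ) (h2 : ∀ a, c a ≤ c (a + 1) + 1) :
    Monotone (Cl n c) := by
  apply monotone_nat_of_le_succ
  intro x
  have hc : ((x + 1 : ℕ) : ZMod n) = (x : ZMod n) + 1 := by push_cast; ring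
  have := h2 (x : ZMod n)
  simp only [Cl, hc]
  omega

lemma cl_add_n (n : ℕ) (c : ZMod n → ℕ) (x : ℕ) :
    Cl n c (x + n) = Cl n c x + n := by
  have hc : ((x + n : ℕ) : ZMod n) = (x : ZMod n) := by
    push_cast; simp
  simp only [Cl, hc]
  omega

lemma cl_add_mul_n (n : ℕ) (c : ZMod n → ℕ) (x t : ℕ) :
    Cl n c (x + n * t) = Cl n c x + n * t := by
  induction t with
  | zero => simp
  | succ t ih =>
    have h' : x + n * (t + 1) = (x + n * t) + n := by ring
    rw [h', cl_add_n, ih]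
    ring

lemma cl_iter_cast (n : ℕ) (c : ZMod n → ℕ) (m x : ℕ) :
    (((Cl n c)^[m] x : ℕ) : ZMod n) = (gam n c)^[m] (x : ZMod n) := by
  induction m with
  | zero => simp
  | succ m ih =>
    rw [Function.iterate_succ_apply', Function.iterate_succ_apply', cl_cast, ih]

lemma cl_iter_sum (n : ℕ) (c : ZMod n → ℕ) (m x : ℕ) :
    (∑ i ∈ Finset.range m, c ((gam n c)^[i] (x : ZMod n))) + x = (Cl n c)^[m] x := by
  induction m with
  | zero => simp
  | succ m ih =>
    rw [Finset.sum_range_succ, Function.iterate_succ_apply', ← cl_iter_cast]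
    simp only [Cl]
    omega

lemma gam_inj_on_periodic (n : ℕ) (c : ZMod n → ℕ) {x y : ZMod n}
    (hx : x ∈ periodicPts (gam n c)) (hy : y ∈ periodicPts (gam n c))
    (h : gam n c x = gam n c y) : x = y := by
  obtain ⟨kx, hkx, hpx⟩ := mem_periodicPts.mp hx
  obtain ⟨ky, hky, hpy⟩ := mem_periodicPts.mp hy
  have hMx : IsPeriodicPt (gam n c) (kx * ky) x := hpx.mul_const ky
  have hMy : IsPeriodicPt (gam n c) (ky * kx) y := hpy.mul_const kx
  rw [Nat.mul_comm] at hMy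
  have hM : 1 ≤ kx * ky := Nat.one_le_iff_ne_zero.mpr (by positivity)
  have hx' : (gam n c)^[kx * ky - 1] (gam n c x) = x := by
    rw [← Function.iterate_succ_apply, Nat.succ_eq_add_one]
    have h' : kx * ky - 1 + 1 = kx * ky := by omega
    rw [h']; exact hMx
  have hy' : (gam n c)^[kx * ky - 1] (gam n c y) = y := by
    rw [← Function.iterate_succ_apply, Nat.succ_eq_add_one]
    have h' : kx * ky - 1 + 1 = kx * ky := by omega
    rw [h']; exact hMy
  rw [← hx', ← hy', h]

section withNeZero
variable (n : ℕ) [NeZero n] (c : ZMod n → ℕ)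

/-- The finite set of periodic points. -/
noncomputable def O : Finset (ZMod n) :=
  Set.Finite.toFinset (Set.toFinite (Function.periodicPts (gam n c)))

lemma mem_O {x : ZMod n} : x ∈ O n c ↔ x ∈ periodicPts (gam n c) :=
  Set.Finite.mem_toFinset _

lemma gam_mem_O {x : ZMod n} (hx : x ∈ O n c) : gam n c x ∈ O n c := by
  rw [mem_O] at hx ⊢
  obtain ⟨k, hk, hp⟩ := mem_periodicPts.mp hx
  exact mem_periodicPts.mpr ⟨k, hk, hp.apply⟩

/-- Number of periodic points. -/
noncomputable def NN : ℕ := (O n c).card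

noncomputable def ovals : Finset ℕ := (O n c).image ZMod.val

lemma card_ovals : (ovals n c).card = NN n c :=
  Finset.card_image_of_injective _ (ZMod.val_injective n)

/-- increasing enumeration of the values of periodic points, extended by 0 -/
noncomputable def vfx : ℕ → ℕ :=
  fun s => if h : s < NN n c then ((ovals n c).orderIsoOfFin (card_ovals n c) ⟨s, h⟩ : ℕ) else 0

lemma vfx_strictMonoOn {s t : ℕ} (hst : s < t) (ht : t < NN n c) :
    vfx n c s < vfx n c t := by
  have hs : s < NN n c := lt_trans hst ht
  simp only [vfx, dif_pos hs, dif_pos ht]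
  exact ((ovals n c).orderIsoOfFin (card_ovals n c)).strictMono (show (⟨s, hs⟩ : Fin _) < ⟨t, ht⟩ from hst)

lemma vfx_mem {s : ℕ} (hs : s < NN n c) : vfx n c s ∈ ovals n c := by
  simp only [vfx, dif_pos hs]
  exact (((ovals n c).orderIsoOfFin (card_ovals n c)) ⟨s, hs⟩).2

lemma vfx_lt {s : ℕ} (hs : s < NN n c) : vfx n c s < n := by
  obtain ⟨z, _, hz⟩ := Finset.mem_image.mp (vfx_mem n c hs)
  rw [← hz]
  exact ZMod.val_lt z

lemma vfx_cast_mem {s : ℕ} (hs : s < NN n c) : ((vfx n c s : ℕ) : ZMod n) ∈ O n c := by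
  obtain ⟨z, hzO, hz⟩ := Finset.mem_image.mp (vfx_mem n c hs)
  rw [← hz, ZMod.natCast_zmod_val]
  exact hzO

lemma vfx_cast_inj {s t : ℕ} (hs : s < NN n c) (ht : t < NN n c)
    (h : ((vfx n c s : ℕ) : ZMod n) = ((vfx n c t : ℕ) : ZMod n)) : s = t := by
  have h' : vfx n c s = vfx n c t := by
    have h1 := ZMod.val_cast_of_lt (vfx_lt n c hs)
    have h2 := ZMod.val_cast_of_lt (vfx_lt n c ht)
    rw [← h1, ← h2, h]
  by_contra hne
  rcases Nat.lt_or_ge s t with hlt | hge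
  · exact absurd h' (Nat.ne_of_lt (vfx_strictMonoOn n c hlt ht))
  · have hlt : t < s := by omega
    exact absurd h'.symm (Nat.ne_of_lt (vfx_strictMonoOn n c hlt hs))

lemma vfx_surj {z : ZMod n} (hz : z ∈ O n c) : ∃ s, s < NN n c ∧ vfx n c s = z.val := by
  have hmem : z.val ∈ ovals n c := Finset.mem_image.mpr ⟨z, hz, rfl⟩
  set e := (ovals n c).orderIsoOfFin (card_ovals n c)
  refine ⟨(e.symm ⟨z.val, hmem⟩ : Fin _), (e.symm ⟨z.val, hmem⟩).2, ?_⟩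
  simp only [vfx, dif_pos (e.symm ⟨z.val, hmem⟩).2]
  have : e ⟨(e.symm ⟨z.val, hmem⟩ : Fin _), (e.symm ⟨z.val, hmem⟩).2⟩ = ⟨z.val, hmem⟩ := by
    rw [show (⟨(e.symm ⟨z.val, hmem⟩ : Fin _), (e.symm ⟨z.val, hmem⟩).2⟩ : Fin _) = e.symm ⟨z.val, hmem⟩ from rfl]
    exact e.apply_symm_apply _
  rw [this]

/-- the increasing enumeration of all lifts of periodic points -/
noncomputable def pf : ℕ → ℕ :=
  fun i => n * (i / NN n c) + vfx n c (i % NN n c)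

lemma pf_eval (hN : 0 < NN n c) (q s : ℕ) (hs : s < NN n c) :
    pf n c (NN n c * q + s) = n * q + vfx n c s := by
  simp only [pf]
  rw [Nat.mul_add_div hN, Nat.mul_add_mod, Nat.div_eq_of_lt hs, Nat.mod_eq_of_lt hs,
    Nat.add_zero]

lemma pf_add_N (hN : 0 < NN n c) (i : ℕ) :
    pf n c (i + NN n c) = pf n c i + n := by
  simp only [pf]
  rw [Nat.add_div_right _ hN, Nat.add_mod_right]
  ring

lemma pf_add_mul_N (hN : 0 < NN n c) (i t : ℕ) :
    pf n c (i + NN n c * t) = pf n c i + n * t := by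
  induction t with
  | zero => simp
  | succ t ih =>
    have h' : i + NN n c * (t + 1) = (i + NN n c * t) + NN n c := by ring
    rw [h', pf_add_N n c hN, ih]
    ring

lemma pf_strictMono (hN : 0 < NN n c) : StrictMono (pf n c) := by
  apply strictMono_nat_of_lt_succ
  intro i
  obtain ⟨q, s, hs, rfl⟩ : ∃ q s, s < NN n c ∧ i = NN n c * q + s :=
    ⟨i / NN n c, i % NN n c, Nat.mod_lt _ hN, (Nat.div_add_mod i (NN n c)).symm⟩
  rcases Nat.lt_or_ge (s + 1) (NN n c) with h | h
  · have h1 : NN n c * q + s + 1 = NN n c * q + (s + 1) := rfl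
    rw [h1, pf_eval n c hN _ _ hs, pf_eval n c hN _ _ h]
    have := vfx_strictMonoOn n c (show s < s + 1 by omega) h
    omega
  · have hEq : s + 1 = NN n c := by omega
    have h1 : NN n c * q + s + 1 = NN n c * (q + 1) + 0 := by
      have : NN n c * (q + 1) = NN n c * q + NN n c := by ring
      omega
    rw [h1, pf_eval n c hN _ _ hs, pf_eval n c hN _ _ hN]
    have hlt := vfx_lt n c hs
    have hmul : n * (q + 1) = n * q + n := by ring
    omega

lemma pf_cast (i : ℕ) :
    ((pf n c i : ℕ) : ZMod n) = ((vfx n c (i % NN n c) : ℕ) : ZMod n) := by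
  simp only [pf]
  push_cast
  simp

lemma pf_cast_mem (hN : 0 < NN n c) (i : ℕ) : ((pf n c i : ℕ) : ZMod n) ∈ O n c := by
  rw [pf_cast]
  exact vfx_cast_mem n c (Nat.mod_lt _ hN)

lemma pf_cast_eq_iff (hN : 0 < NN n c) (i j : ℕ) :
    ((pf n c i : ℕ) : ZMod n) = ((pf n c j : ℕ) : ZMod n) ↔ i % NN n c = j % NN n c := by
  rw [pf_cast, pf_cast]
  constructor
  · intro h
    exact vfx_cast_inj n c (Nat.mod_lt _ hN) (Nat.mod_lt _ hN) h
  · intro h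
    rw [h]

lemma pf_surj (hN : 0 < NN n c) (x : ℕ) (hx : ((x : ℕ) : ZMod n) ∈ O n c) :
    ∃ i, pf n c i = x := by
  obtain ⟨s, hsN, hsv⟩ := vfx_surj n c hx
  refine ⟨NN n c * (x / n) + s, ?_⟩
  rw [pf_eval n c hN _ _ hsN, hsv, ZMod.val_natCast]
  have := Nat.div_add_mod x n
  omega

end withNeZero
end Stmt4Aux

open Function Stmt4Aux in
/-- All cycles of the resolution quiver have the same weight. -/
theorem stmt4 (n : ℕ) (hn : 1 ≤ n) (c : ZMod n → ℕ)
    (h1 : ∀ a, 1 ≤ c a) (h2 : ∀ a, c a ≤ c (a + 1) + 1)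
    (a b : ZMod n)
    (ha : a ∈ Function.periodicPts (gam n c))
    (hb : b ∈ Function.periodicPts (gam n c)) :
    ∑ i ∈ Finset.range (Function.minimalPeriod (gam n c) a), c ((gam n c)^[i] a) =
      ∑ j ∈ Finset.range (Function.minimalPeriod (gam n c) b), c ((gam n c)^[j] b) := by
  haveI : NeZero n := ⟨by omega⟩
  have haO : a ∈ O n c := (mem_O n c).mpr ha
  have hbO : b ∈ O n c := (mem_O n c).mpr hb
  have hN : 0 < NN n c := Finset.card_pos.mpr ⟨a, haO⟩
  set N := NN n c with hNdef
  -- the index map σ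
  have hσex : ∀ i : ℕ, ∃ j : ℕ, pf n c j = Cl n c (pf n c i) := by
    intro i
    apply pf_surj n c hN
    rw [cl_cast]
    exact gam_mem_O n c (pf_cast_mem n c hN i)
  choose σ hσ using hσex
  have hpmono := pf_strictMono n c hN
  -- σ is strictly monotone
  have hσmono : StrictMono σ := by
    intro i j hij
    have hCle : Cl n c (pf n c i) ≤ Cl n c (pf n c j) :=
      cl_mono n c h2 (le_of_lt (hpmono hij))
    have hCne : Cl n c (pf n c i) ≠ Cl n c (pf n c j) := by
      intro hEq
      have hcast : ((pf n c i : ℕ) : ZMod n) = ((pf n c j : ℕ) : ZMod n) := by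
        apply gam_inj_on_periodic n c
        · exact (mem_O n c).mp (pf_cast_mem n c hN i)
        · exact (mem_O n c).mp (pf_cast_mem n c hN j)
        · rw [← cl_cast, ← cl_cast, hEq]
      have hmod : i % N = j % N := (pf_cast_eq_iff n c hN i j).mp hcast
      have hdvd : N ∣ j - i := (Nat.modEq_iff_dvd' (le_of_lt hij)).mp hmod
      obtain ⟨t, ht⟩ := hdvd
      have htpos : 0 < t := by
        by_contra h0
        have ht0 : t = 0 := by omega
        rw [ht0, Nat.mul_zero] at ht
        omega
      have hpf : pf n c j = pf n c i + n * t := by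
        have hji : j = i + N * t := by omega
        rw [hji, pf_add_mul_N n c hN]
      have hcl : Cl n c (pf n c j) = Cl n c (pf n c i) + n * t := by
        rw [hpf, cl_add_mul_n]
      have h0 : n * t = 0 := left_eq_add.mp (hEq.trans hcl)
      have hnt : 0 < n * t := by positivity
      omega
    have hlt : pf n c (σ i) < pf n c (σ j) := by
      rw [hσ, hσ]; omega
    exact hpmono.lt_iff_lt.mp hlt
  -- σ commutes with + N
  have hσN : ∀ i, σ (i + N) = σ i + N := by
    intro i
    have heq : pf n c (σ (i + N)) = pf n c (σ i + N) := by
      rw [hσ, pf_add_N n c hN, pf_add_N n c hN, hσ]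
      exact cl_add_n n c _
    exact hpmono.injective heq
  -- σ is a translation
  have hσgrow : ∀ i k : ℕ, σ i + k ≤ σ (i + k) := by
    intro i k
    induction k with
    | zero => simp
    | succ k ih =>
      have := hσmono (show i + k < i + (k + 1) by omega)
      omega
  set r := σ 0 with hrdef
  have hσsmall : ∀ s : ℕ, s ≤ N → σ s = r + s := by
    intro s hs
    have hg1 : r + s ≤ σ s := by simpa using hσgrow 0 s
    have hg2 : σ s + (N - s) ≤ σ N := by
      have := hσgrow s (N - s)
      have hss : s + (N - s) = N := by omega
      rw [hss] at this
      exact this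
    have hg3 : σ N = r + N := by
      have := hσN 0
      simpa using this
    omega
  have hσmulN : ∀ s t : ℕ, σ (s + N * t) = σ s + N * t := by
    intro s t
    induction t with
    | zero => simp
    | succ t ih =>
      have h' : s + N * (t + 1) = (s + N * t) + N := by ring
      rw [h', hσN, ih]
      ring
  have hσtrans : ∀ i : ℕ, σ i = i + r := by
    intro i
    have hdm := Nat.div_add_mod i N
    have h' : i = i % N + N * (i / N) := by omega
    rw [h', hσmulN, hσsmall (i % N) (le_of_lt (Nat.mod_lt _ hN))]
    ring
  -- iterate formula
  have hiter : ∀ (m i : ℕ), (Cl n c)^[m] (pf n c i) = pf n c (i + m * r) := by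
    intro m
    induction m with
    | zero => simp
    | succ m ih =>
      intro i
      rw [Function.iterate_succ_apply', ih, ← hσ, hσtrans]
      congr 1
      ring
  -- periodicity criterion
  have hkey : ∀ (i m : ℕ), IsPeriodicPt (gam n c) m ((pf n c i : ℕ) : ZMod n) ↔ N ∣ m * r := by
    intro i m
    have hone : (gam n c)^[m] ((pf n c i : ℕ) : ZMod n)
        = ((pf n c (i + m * r) : ℕ) : ZMod n) := by
      rw [← cl_iter_cast, hiter]
    constructor
    · intro hp
      have heq : ((pf n c (i + m * r) : ℕ) : ZMod n) = ((pf n c i : ℕ) : ZMod n) := by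
        rw [← hone]; exact hp
      have hmod := (pf_cast_eq_iff n c hN _ _).mp heq
      have := (Nat.modEq_iff_dvd' (show i ≤ i + m * r by omega)).mp hmod.symm
      simpa using this
    · intro hdvd
      obtain ⟨t, ht⟩ := hdvd
      have heq : ((pf n c (i + m * r) : ℕ) : ZMod n) = ((pf n c i : ℕ) : ZMod n) := by
        rw [ht, pf_add_mul_N n c hN]
        push_cast
        simp
      exact hone.trans heq
  -- lifts of a and b
  obtain ⟨ia, hia⟩ := pf_surj n c hN a.val (by rw [ZMod.natCast_zmod_val]; exact haO)
  obtain ⟨ib, hib⟩ := pf_surj n c hN b.val (by rw [ZMod.natCast_zmod_val]; exact hbO)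
  have hacast : ((pf n c ia : ℕ) : ZMod n) = a := by rw [hia, ZMod.natCast_zmod_val]
  have hbcast : ((pf n c ib : ℕ) : ZMod n) = b := by rw [hib, ZMod.natCast_zmod_val]
  -- equal minimal periods
  set ka := minimalPeriod (gam n c) a with hkadef
  set kb := minimalPeriod (gam n c) b with hkbdef
  have hpa : IsPeriodicPt (gam n c) ka a := isPeriodicPt_minimalPeriod _ _
  have hpb : IsPeriodicPt (gam n c) kb b := isPeriodicPt_minimalPeriod _ _
  have hdva : N ∣ ka * r := (hkey ia ka).mp (by rw [hacast]; exact hpa)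
  have hdvb : N ∣ kb * r := (hkey ib kb).mp (by rw [hbcast]; exact hpb)
  have hab : kb ∣ ka := by
    have hper : IsPeriodicPt (gam n c) ka b := by
      have := (hkey ib ka).mpr hdva
      rwa [hbcast] at this
    exact hper.minimalPeriod_dvd
  have hba : ka ∣ kb := by
    have hper : IsPeriodicPt (gam n c) kb a := by
      have := (hkey ia kb).mpr hdvb
      rwa [hacast] at this
    exact hper.minimalPeriod_dvd
  have hk : ka = kb := Nat.dvd_antisymm hba hab
  -- compute both sums
  obtain ⟨t, ht⟩ := hdva
  have hsa : (∑ i ∈ Finset.range ka, c ((gam n c)^[i] a)) + pf n c ia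
      = n * t + pf n c ia := by
    have hsum := cl_iter_sum n c ka (pf n c ia)
    rw [hacast] at hsum
    rw [hsum, hiter, ht, pf_add_mul_N n c hN]
    exact Nat.add_comm _ _
  have hsb : (∑ j ∈ Finset.range kb, c ((gam n c)^[j] b)) + pf n c ib
      = n * t + pf n c ib := by
    have hsum := cl_iter_sum n c kb (pf n c ib)
    rw [hbcast] at hsum
    rw [hsum, hiter, ← hk, ht, pf_add_mul_N n c hN]
    exact Nat.add_comm _ _
  have hsa2 : (∑ i ∈ Finset.range ka, c ((gam n c)^[i] a)) = n * t :=
    Nat.add_right_cancel hsa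
  have hsb2 : (∑ j ∈ Finset.range kb, c ((gam n c)^[j] b)) = n * t :=
    Nat.add_right_cancel hsb
  exact hsa2.trans hsb2.symm
end

section
/- Let n ≥ 1 and c : ZMod n → ℕ satisfy c(a) ≥ 1 and c(a+1) + 1 ≥ c(a) for all a, and define γ(a) = a + c(a). Let B = {a : c(a+1) ≠ c(a) - 1} be the set of black vertices. Then the restriction of γ to B is injective and γ(B) = γ(ZMod n); that is, γ induces a bijection between black vertices and non-leaf vertices of the resolution quiver. -/
lemma gam_L (n : ℕ) (c : ZMod n → ℕ) (h2 : ∀ a, c a ≤ c (a + 1) + 1) :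
    ∀ (k : ℕ) (a : ZMod n), c a ≤ c (a + k) + k := by
  intro k
  induction k with
  | zero => intro a; simpa using le_refl (c a)
  | succ k ih =>
    intro a
    have hstep := h2 a
    have h := ih (a + 1)
    have hc : a + 1 + (k : ZMod n) = a + ((k + 1 : ℕ) : ZMod n) := by push_cast; ring
    rw [hc] at h
    omega

lemma gam_L2 (n : ℕ) (c : ZMod n → ℕ) (h2 : ∀ a, c a ≤ c (a + 1) + 1)
    (k : ℕ) (hk : 1 ≤ k) (a : ZMod n) (heq : c (a + (k : ZMod n)) + k = c a) :
    c (a + 1) + 1 = c a := by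
  obtain ⟨j, rfl⟩ : ∃ j, k = j + 1 := ⟨k - 1, by omega⟩
  have h := gam_L n c h2 j (a + 1)
  have hc : a + 1 + (j : ZMod n) = a + ((j + 1 : ℕ) : ZMod n) := by push_cast; ring
  rw [hc] at h
  have hstep := h2 a
  omega

lemma gam_exists_black (n : ℕ) (hn : 1 ≤ n) (c : ZMod n → ℕ)
    (h1 : ∀ a, 1 ≤ c a) (h2 : ∀ a, c a ≤ c (a + 1) + 1) (a : ZMod n) :
    ∃ j : ℕ, c (a + (j : ZMod n) + 1) ≠ c (a + (j : ZMod n)) - 1 := by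
  by_contra h
  push_neg at h
  have key : ∀ j : ℕ, c a = c (a + (j : ZMod n)) + j := by
    intro j
    induction j with
    | zero => simp
    | succ j ih =>
      have hr := h j
      have h1' := h1 (a + (j : ZMod n) + 1)
      have hc : a + ((j + 1 : ℕ) : ZMod n) = a + (j : ZMod n) + 1 := by push_cast; ring
      rw [hc]
      omega
  have hkey := key n
  rw [show ((n : ℕ) : ZMod n) = 0 from ZMod.natCast_self n] at hkey
  simp only [add_zero] at hkey
  omega

lemma gam_chain (n : ℕ) (c : ZMod n → ℕ) (h1 : ∀ a, 1 ≤ c a)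
    (h2 : ∀ a, c a ≤ c (a + 1) + 1) :
    ∀ (j : ℕ) (a : ZMod n),
      (∀ i < j, c (a + (i : ZMod n) + 1) = c (a + (i : ZMod n)) - 1) →
      gam n c a = gam n c (a + (j : ZMod n)) := by
  intro j
  induction j with
  | zero => intro a _; simp
  | succ j ih =>
    intro a hred
    have h0 := hred 0 (by omega)
    simp only [Nat.cast_zero, add_zero] at h0
    have h1a := h1 (a + 1)
    have hca : c a = c (a + 1) + 1 := by omega
    have step : gam n c a = gam n c (a + 1) := by
      simp only [gam, hca]
      push_cast
      ring
    rw [step]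
    have hred' : ∀ i < j, c (a + 1 + (i : ZMod n) + 1) = c (a + 1 + (i : ZMod n)) - 1 := by
      intro i hi
      have := hred (i + 1) (by omega)
      have hc : a + ((i + 1 : ℕ) : ZMod n) = a + 1 + (i : ZMod n) := by push_cast; ring
      rw [hc] at this
      exact this
    have := ih (a + 1) hred'
    have hc : a + 1 + (j : ZMod n) = a + ((j + 1 : ℕ) : ZMod n) := by push_cast; ring
    rw [hc] at this
    exact this

/-- γ induces a bijection between black vertices and non-leaf vertices. -/
theorem stmt6 (n : ℕ) (hn : 1 ≤ n) (c : ZMod n → ℕ)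
    (h1 : ∀ a, 1 ≤ c a) (h2 : ∀ a, c a ≤ c (a + 1) + 1) :
    Set.InjOn (gam n c) {a : ZMod n | c (a + 1) ≠ c a - 1} ∧
      gam n c '' {a : ZMod n | c (a + 1) ≠ c a - 1} = Set.range (gam n c) := by
  haveI : NeZero n := ⟨by omega⟩
  constructor
  · intro a ha b hb hab
    by_contra hne
    set k := (b - a).val with hk
    have hk1 : 1 ≤ k := by
      rcases Nat.eq_zero_or_pos k with h | h
      · exact absurd (sub_eq_zero.mp ((ZMod.val_eq_zero _).mp h)).symm hne
      · omega
    have hkn : k < n := ZMod.val_lt _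
    have hbk : b = a + (k : ZMod n) := by
      rw [hk, ZMod.natCast_rightInverse (b - a)]; ring
    -- modular equation
    have hmod : ((c a : ℕ) : ZMod n) = ((k + c b : ℕ) : ZMod n) := by
      have : a + (c a : ZMod n) = a + (k : ZMod n) + (c b : ZMod n) := by
        simpa [gam, hbk] using hab
      push_cast
      linear_combination this - (congrArg id (rfl : a = a))
    have hdvd : (n : ℤ) ∣ ((k + c b : ℕ) : ℤ) - (c a : ℤ) :=
      ((ZMod.natCast_eq_natCast_iff _ _ _).mp hmod).dvd
    -- bounds
    have hub : c a ≤ c b + k := by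
      have := gam_L n c h2 k a
      rw [← hbk] at this
      omega
    have hlb : c b ≤ c a + (n - k) := by
      have := gam_L n c h2 (n - k) b
      have hc : b + ((n - k : ℕ) : ZMod n) = a := by
        rw [Nat.cast_sub (by omega), ZMod.natCast_self, hbk]
        ring
      rw [hc] at this
      omega
    obtain ⟨m, hm⟩ := hdvd
    have hnZ : (0 : ℤ) < n := by exact_mod_cast hn
    have hI1 : (0 : ℤ) ≤ (n : ℤ) * m := by rw [← hm]; push_cast; omega
    have hI2 : (n : ℤ) * m ≤ n := by rw [← hm]; push_cast; omega
    have hm0 : 0 ≤ m := by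
      by_contra h
      push_neg at h
      have : (n : ℤ) * m ≤ (n : ℤ) * (-1) :=
        mul_le_mul_of_nonneg_left (by omega) (by positivity)
      linarith
    have hm1 : m ≤ 1 := by
      by_contra h
      push_neg at h
      have : (n : ℤ) * 2 ≤ (n : ℤ) * m :=
        mul_le_mul_of_nonneg_left (by omega) (by positivity)
      linarith
    interval_cases m
    · -- k + c b = c a
      have heq : c (a + (k : ZMod n)) + k = c a := by
        rw [← hbk]; push_cast at hm; omega
      have := gam_L2 n c h2 k hk1 a heq
      have := h1 (a + 1)
      simp only [Set.mem_setOf_eq] at ha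
      omega
    · -- k + c b = c a + n
      have heq : c (b + ((n - k : ℕ) : ZMod n)) + (n - k) = c b := by
        have hc : b + ((n - k : ℕ) : ZMod n) = a := by
          rw [Nat.cast_sub (by omega), ZMod.natCast_self, hbk]
          ring
        rw [hc]
        push_cast at hm
        omega
      have := gam_L2 n c h2 (n - k) (by omega) b heq
      have := h1 (b + 1)
      simp only [Set.mem_setOf_eq] at hb
      omega
  · apply Set.Subset.antisymm (Set.image_subset_range _ _)
    rintro y ⟨a, rfl⟩
    have hex := gam_exists_black n hn c h1 h2 a
    classical
    set j := Nat.find hex with hj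
    have hspec := Nat.find_spec hex
    have hmin : ∀ i < j, c (a + (i : ZMod n) + 1) = c (a + (i : ZMod n)) - 1 := by
      intro i hi
      have := Nat.find_min hex hi
      push_neg at this
      exact this
    refine ⟨a + (j : ZMod n), hspec, (gam_chain n c h1 h2 j a hmin).symm⟩
end

section
/- Let n ≥ 1 and c : ZMod n → ℕ satisfy c(a) ≥ 1 and c(a+1) + 1 ≥ c(a) for all a, and define γ(a) = a + c(a). For a ∈ ZMod n, one has γ⁻¹({γ(a)}) = {a} if and only if both c(a+1) ≠ c(a) - 1 and c(a) ≠ c(a-1) - 1 (i.e., both a and a-1 are black). -/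
/-- A vertex is the unique predecessor of its successor iff both it and its
τ⁻¹-translate are black. -/
theorem stmt7 (n : ℕ) (hn : 1 ≤ n) (c : ZMod n → ℕ)
    (h1 : ∀ a, 1 ≤ c a) (h2 : ∀ a, c a ≤ c (a + 1) + 1) (a : ZMod n) :
    gam n c ⁻¹' {gam n c a} = {a} ↔
      (c (a + 1) ≠ c a - 1 ∧ c a ≠ c (a - 1) - 1) := by
  haveI : NeZero n := ⟨by omega⟩
  constructor
  · intro h
    constructor
    · intro hc
      have key : gam n c (a + 1) = gam n c a := by
        simp only [gam]
        rw [hc, Nat.cast_sub (h1 a), Nat.cast_one]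
        ring
      have hmem : a + 1 ∈ gam n c ⁻¹' {gam n c a} := by
        simp [Set.mem_preimage, key]
      rw [h] at hmem
      have h11 : a + 1 = a := hmem
      have hcc : c (a + 1) = c a := by rw [h11]
      have := h1 a
      omega
    · intro hc
      have hc' : c (a - 1) = c a + 1 := by have := h1 (a - 1); omega
      have key : gam n c (a - 1) = gam n c a := by
        simp only [gam, hc']
        push_cast
        ring
      have hmem : a - 1 ∈ gam n c ⁻¹' {gam n c a} := by
        simp [Set.mem_preimage, key]
      rw [h] at hmem
      have h11 : a - 1 = a := hmem
      have hcc : c (a - 1) = c a := by rw [h11]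
      omega
  · rintro ⟨hb1, hb2⟩
    ext b
    simp only [Set.mem_preimage, Set.mem_singleton_iff]
    constructor
    · intro hb
      by_contra hne
      -- integer lift
      set F : ℤ → ℤ := fun k => k + (c ((k : ℤ) : ZMod n) : ℤ) with hF
      have Fmono : Monotone F := by
        apply monotone_int_of_le_succ
        intro k
        have h2' : (c ((k : ℤ) : ZMod n) : ℤ) ≤ (c (((k : ℤ) : ZMod n) + 1) : ℤ) + 1 := by
          exact_mod_cast h2 ((k : ℤ) : ZMod n)
        simp only [hF]
        have hcast : (((k + 1 : ℤ)) : ZMod n) = ((k : ℤ) : ZMod n) + 1 := by push_cast; ring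
        rw [hcast]
        omega
      have hcastn : ((n : ℕ) : ZMod n) = 0 := ZMod.natCast_self n
      set i : ℤ := (a.val : ℤ) with hi
      have ha' : ((i : ℤ) : ZMod n) = a := by
        rw [hi]; push_cast; exact ZMod.natCast_rightInverse a
      have hbv' : (((b.val : ℤ)) : ZMod n) = b := by
        push_cast; exact ZMod.natCast_rightInverse b
      have hvne : b.val ≠ a.val := fun hv => hne (by
        rw [← hbv', ← ha', hi, hv])
      have hvla : a.val < n := ZMod.val_lt a
      have hvlb : b.val < n := ZMod.val_lt b
      set j : ℤ := if a.val < b.val then (b.val : ℤ) else (b.val : ℤ) + n with hj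
      have hb' : ((j : ℤ) : ZMod n) = b := by
        rw [hj]; split
        · exact hbv'
        · push_cast
          rw [hcastn, add_zero]
          exact_mod_cast hbv'
      have hij1 : i < j := by
        rw [hi, hj]; split <;> [skip; skip] <;> omega
      have hij2 : j < i + n := by
        rw [hi, hj]; split <;> omega
      -- F values congruent
      have hγ : b + (c b : ZMod n) = a + (c a : ZMod n) := hb
      have hcong : ((F j - F i : ℤ) : ZMod n) = 0 := by
        simp only [hF]
        push_cast
        rw [ha', hb']
        rw [sub_eq_zero]
        exact hγ
      have hdvd : (n : ℤ) ∣ F j - F i := by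
        exact (ZMod.intCast_zmod_eq_zero_iff_dvd _ n).mp hcong
      have hle1 : F i ≤ F j := Fmono hij1.le
      have hper : F (i + n) = F i + n := by
        simp only [hF]
        have : (((i + n : ℤ)) : ZMod n) = ((i : ℤ) : ZMod n) := by
          push_cast; rw [hcastn]; ring
        rw [this]; ring
      have hle2 : F j ≤ F i + n := by
        rw [← hper]; exact Fmono hij2.le
      have hcases : F j - F i = 0 ∨ F j - F i = n := by
        by_cases h0 : F j - F i = 0
        · exact Or.inl h0
        · right
          have hpos : 0 < F j - F i := by omega
          have := Int.le_of_dvd hpos hdvd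
          omega
      rcases hcases with h0 | hn'
      · -- F constant on [i, i+1]
        have e1 : F i ≤ F (i + 1) := Fmono (by omega)
        have e2 : F (i + 1) ≤ F j := Fmono (by omega)
        have e3 : F (i + 1) = F i := by omega
        have hcast1 : (((i + 1 : ℤ)) : ZMod n) = a + 1 := by push_cast; rw [ha']
        simp only [hF] at e3
        rw [hcast1, ha'] at e3
        have : (c (a + 1) : ℤ) + 1 = (c a : ℤ) := by omega
        have hnat : c (a + 1) + 1 = c a := by exact_mod_cast this
        exact hb1 (by omega)
      · -- F constant on [i+n-1, i+n]
        have e1 : F j ≤ F (i + n - 1) := Fmono (by omega)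
        have e2 : F (i + n - 1) ≤ F (i + n) := Fmono (by omega)
        have e3 : F (i + n - 1) = F (i + n) := by
          rw [hper]; omega
        have hcast1 : (((i + n - 1 : ℤ)) : ZMod n) = a - 1 := by
          push_cast; rw [hcastn, ha']; ring
        have hcast2 : (((i + n : ℤ)) : ZMod n) = a := by
          push_cast; rw [hcastn, ha']; ring
        simp only [hF] at e3
        rw [hcast1, hcast2] at e3
        have : (c (a - 1) : ℤ) = (c a : ℤ) + 1 := by omega
        have hnat : c (a - 1) = c a + 1 := by exact_mod_cast this
        exact hb2 (by omega)
    · rintro rfl; rfl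
end

section
/- Let n ≥ 1 and c : ZMod n → ℕ satisfy c(a) ≥ 1 and c(a+1) + 1 ≥ c(a) for all a, and define γ(a) = a + c(a). Then the number of red vertices equals the number of leaves: |{a : c(a+1) = c(a) - 1}| = n - |Set.range γ|. -/
/-- For a monotone sequence, distinct values + repeats = length. -/
lemma card_image_add_repeats (F : ℕ → ℕ) (hF : Monotone F) (m : ℕ) :
    ((Finset.range (m+1)).image F).card
      + (((Finset.range m).filter (fun k => F (k+1) = F k))).card = m + 1 := by
  induction m with
  | zero => simp
  | succ m ih =>
    rw [Finset.range_add_one (n := m), Finset.filter_insert,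
        Finset.range_add_one (n := m+1), Finset.image_insert]
    by_cases h : F (m+1) = F m
    · rw [if_pos h]
      have hmem : F (m+1) ∈ (Finset.range (m+1)).image F := by
        rw [h]; exact Finset.mem_image_of_mem F (by simp)
      have hnm : m ∉ (Finset.range m).filter (fun k => F (k+1) = F k) := by
        intro hc
        exact absurd (Finset.mem_filter.mp hc).1 (by simp)
      rw [Finset.insert_eq_self.mpr hmem, Finset.card_insert_of_notMem hnm]
      omega
    · rw [if_neg h]
      have hne : F (m+1) ∉ (Finset.range (m+1)).image F := by
        intro hmem
        obtain ⟨k, hk, hk2⟩ := Finset.mem_image.mp hmem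
        have h1 : F k ≤ F m := hF (Nat.lt_succ_iff.mp (Finset.mem_range.mp hk))
        have h2 : F m ≤ F (m+1) := hF (by omega)
        exact h (le_antisymm (hk2 ▸ h1) h2)
      rw [Finset.card_insert_of_notMem hne]
      omega

/-- Casting to `ZMod n` a finset contained in an interval of length `n` whose
both endpoints belong to the finset drops the cardinality by exactly one. -/
lemma cast_image_card (n a : ℕ) (hn : 1 ≤ n) (S : Finset ℕ)
    (hS : ∀ x ∈ S, a ≤ x ∧ x ≤ a + n) (ha : a ∈ S) (ha2 : a + n ∈ S) :
    (S.image (fun x => ((x : ℕ) : ZMod n))).card = S.card - 1 := by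
  have hcast : ((a + n : ℕ) : ZMod n) = (a : ZMod n) := by
    push_cast [ZMod.natCast_self]; ring
  have key : S.image (fun x => ((x : ℕ) : ZMod n))
      = (S.erase (a+n)).image (fun x => ((x : ℕ) : ZMod n)) := by
    ext b
    simp only [Finset.mem_image, Finset.mem_erase]
    constructor
    · rintro ⟨x, hx, rfl⟩
      by_cases hxa : x = a + n
      · subst hxa
        exact ⟨a, ⟨by omega, ha⟩, hcast.symm⟩
      · exact ⟨x, ⟨hxa, hx⟩, rfl⟩
    · rintro ⟨x, ⟨_, hx⟩, rfl⟩
      exact ⟨x, hx, rfl⟩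
  have hinj : Set.InjOn (fun x => ((x : ℕ) : ZMod n)) ↑(S.erase (a+n)) := by
    intro x hx y hy hxy
    simp only [Finset.coe_erase, Set.mem_diff, Finset.mem_coe] at hx hy
    have hx1 := hS x hx.1
    have hy1 := hS y hy.1
    have hx2 : x < a + n := lt_of_le_of_ne hx1.2 (by simpa using hx.2)
    have hy2 : y < a + n := lt_of_le_of_ne hy1.2 (by simpa using hy.2)
    have hmod : x ≡ y [MOD n] := (ZMod.natCast_eq_natCast_iff x y n).mp hxy
    rcases le_total x y with hle | hle
    · have hd : n ∣ y - x := (Nat.modEq_iff_dvd' hle).mp hmod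
      have := Nat.eq_zero_of_dvd_of_lt hd (by omega)
      omega
    · have hd : n ∣ x - y := (Nat.modEq_iff_dvd' hle).mp hmod.symm
      have := Nat.eq_zero_of_dvd_of_lt hd (by omega)
      omega
  rw [key, Finset.card_image_of_injOn hinj, Finset.card_erase_of_mem ha2]

/-- The number of red vertices equals the number of leaves. -/
theorem stmt8 (n : ℕ) (hn : 1 ≤ n) (c : ZMod n → ℕ)
    (h1 : ∀ a, 1 ≤ c a) (h2 : ∀ a, c a ≤ c (a + 1) + 1) :
    {a : ZMod n | c (a + 1) = c a - 1}.ncard = n - (Set.range (gam n c)).ncard := by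
  haveI : NeZero n := ⟨by omega⟩
  set F : ℕ → ℕ := fun k => k + c (k : ZMod n) with hFdef
  have hcastsucc : ∀ k : ℕ, ((k + 1 : ℕ) : ZMod n) = (k : ZMod n) + 1 := by
    intro k; push_cast; ring
  have hmono : Monotone F := by
    apply monotone_nat_of_le_succ
    intro k
    have h := h2 (k : ZMod n)
    simp only [hFdef, hcastsucc k]
    omega
  have hFn : F n = F 0 + n := by
    simp only [hFdef]
    have : ((n : ℕ) : ZMod n) = ((0 : ℕ) : ZMod n) := by
      simp [ZMod.natCast_self]
    rw [this]
    omega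
  set Rset := (Finset.range n).filter (fun k => F (k+1) = F k) with hRdef
  have hval : ∀ a : ZMod n, ((a.val : ℕ) : ZMod n) = a := fun a => ZMod.natCast_rightInverse a
  -- red set
  have hredset : {a : ZMod n | c (a + 1) = c a - 1}
      = ↑(Rset.image (fun k => ((k : ℕ) : ZMod n))) := by
    ext a
    simp only [Set.mem_setOf_eq, Finset.coe_image, Set.mem_image, Finset.mem_coe,
      hRdef, Finset.mem_filter, Finset.mem_range]
    constructor
    · intro h
      refine ⟨a.val, ⟨ZMod.val_lt a, ?_⟩, hval a⟩
      have h1a := h1 a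
      simp only [hFdef, hcastsucc a.val, hval a]
      omega
    · rintro ⟨k, ⟨hk, hFk⟩, rfl⟩
      simp only [hFdef, hcastsucc k] at hFk
      omega
  -- range set
  set T := (Finset.range (n+1)).image F with hTdef
  have hrange : Set.range (gam n c) = ↑(T.image (fun x => ((x : ℕ) : ZMod n))) := by
    ext b
    simp only [Set.mem_range, Finset.coe_image, Set.mem_image, Finset.mem_coe,
      hTdef, Finset.mem_image, Finset.mem_range, gam]
    constructor
    · rintro ⟨a, rfl⟩
      refine ⟨F a.val, ⟨a.val, by have := ZMod.val_lt a; omega, rfl⟩, ?_⟩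
      simp only [hFdef]
      push_cast
      rw [hval a]
    · rintro ⟨x, ⟨k, hk, rfl⟩, rfl⟩
      refine ⟨(k : ZMod n), ?_⟩
      simp only [hFdef]
      push_cast
      ring
  -- cardinalities
  have hbounds : ∀ x ∈ T, F 0 ≤ x ∧ x ≤ F 0 + n := by
    intro x hx
    obtain ⟨k, hk, rfl⟩ := Finset.mem_image.mp hx
    have hk' := Finset.mem_range.mp hk
    constructor
    · exact hmono (Nat.zero_le k)
    · rw [← hFn]; exact hmono (by omega)
  have haT : F 0 ∈ T := Finset.mem_image_of_mem F (by simp)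
  have haT2 : F 0 + n ∈ T := by
    rw [← hFn]; exact Finset.mem_image_of_mem F (by simp)
  have hTcard := cast_image_card n (F 0) hn T hbounds haT haT2
  have hTtot := card_image_add_repeats F hmono n
  have hRinj : Set.InjOn (fun k => ((k : ℕ) : ZMod n)) ↑Rset := by
    intro x hx y hy hxy
    simp only [hRdef, Finset.coe_filter, Set.mem_setOf_eq, Finset.mem_range] at hx hy
    have := ZMod.val_cast_of_lt hx.1
    have := ZMod.val_cast_of_lt hy.1
    have hxy' : ((x : ℕ) : ZMod n) = ((y : ℕ) : ZMod n) := hxy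
    calc x = ((x : ZMod n)).val := (ZMod.val_cast_of_lt hx.1).symm
    _ = ((y : ZMod n)).val := by rw [hxy']
    _ = y := ZMod.val_cast_of_lt hy.1
  have hRcard : (Rset.image (fun k => ((k : ℕ) : ZMod n))).card = Rset.card :=
    Finset.card_image_of_injOn hRinj
  have hTtot' : T.card + Rset.card = n + 1 := hTtot
  have hRle : Rset.card ≤ n := le_trans (Finset.card_filter_le _ _) (by simp)
  rw [hredset, hrange, Set.ncard_coe_finset, Set.ncard_coe_finset, hRcard, hTcard]
  omega
end

section
/- Let n ≥ 1 and c : ZMod n → ℕ satisfy c(a) ≥ 1 and c(a+1) + 1 ≥ c(a) for all a, and define γ(a) = a + c(a). Then every nonempty fiber γ⁻¹({y}) contains exactly one black vertex, i.e., exactly one element a with c(a+1) ≠ c(a) - 1. -/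
/-- Auxiliary potential function: `Dfun n c b j = c (b + j) + j`. -/
def Dfun (n : ℕ) (c : ZMod n → ℕ) (b : ZMod n) (j : ℕ) : ℕ := c (b + (j : ZMod n)) + j

lemma Dfun_mono (n : ℕ) (c : ZMod n → ℕ) (h2 : ∀ a, c a ≤ c (a + 1) + 1)
    (b : ZMod n) : Monotone (Dfun n c b) := by
  apply monotone_nat_of_le_succ
  intro j
  have hc := h2 (b + (j : ZMod n))
  have hcast : b + ((j + 1 : ℕ) : ZMod n) = b + (j : ZMod n) + 1 := by push_cast; ring
  simp only [Dfun, hcast]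
  omega

lemma Dfun_n (n : ℕ) (c : ZMod n → ℕ) (b : ZMod n) :
    Dfun n c b n = Dfun n c b 0 + n := by
  simp [Dfun, ZMod.natCast_self]

lemma gam_Dfun (n : ℕ) (c : ZMod n → ℕ) (b : ZMod n) (j : ℕ) :
    gam n c (b + (j : ZMod n)) = b + ((Dfun n c b j : ℕ) : ZMod n) := by
  simp only [gam, Dfun]
  push_cast
  ring

lemma black_iff (n : ℕ) (c : ZMod n → ℕ)
    (h1 : ∀ a, 1 ≤ c a) (h2 : ∀ a, c a ≤ c (a + 1) + 1) (b : ZMod n) (j : ℕ) :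
    (c (b + (j : ZMod n) + 1) ≠ c (b + (j : ZMod n)) - 1) ↔
      Dfun n c b j < Dfun n c b (j + 1) := by
  have h1' := h1 (b + (j : ZMod n))
  have h2' := h2 (b + (j : ZMod n))
  have hcast : b + ((j + 1 : ℕ) : ZMod n) = b + (j : ZMod n) + 1 := by push_cast; ring
  simp only [Dfun, hcast]
  omega

lemma uniq_black (n : ℕ) (hn : 1 ≤ n) (c : ZMod n → ℕ)
    (h1 : ∀ a, 1 ≤ c a) (h2 : ∀ a, c a ≤ c (a + 1) + 1)
    (b₁ b₂ : ZMod n) (hb₁ : c (b₁ + 1) ≠ c b₁ - 1) (hb₂ : c (b₂ + 1) ≠ c b₂ - 1)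
    (hg : gam n c b₂ = gam n c b₁) : b₁ = b₂ := by
  haveI : NeZero n := ⟨by omega⟩
  set k : ℕ := (b₂ - b₁).val with hk
  have hkn : k < n := ZMod.val_lt _
  have hb2 : b₂ = b₁ + (k : ZMod n) := by
    rw [hk, ZMod.natCast_val, ZMod.cast_id]
    ring
  set D := Dfun n c b₁ with hDdef
  have hmono : Monotone D := Dfun_mono n c h2 b₁
  have hD0 : b₁ + ((0 : ℕ) : ZMod n) = b₁ := by simp
  -- γ b₂ = γ b₁ implies ↑(D k) = ↑(D 0)
  have hgk : (D k : ZMod n) = (D 0 : ZMod n) := by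
    have e1 := gam_Dfun n c b₁ k
    have e2 := gam_Dfun n c b₁ 0
    rw [← hb2] at e1
    rw [hD0] at e2
    rw [e1, e2] at hg
    exact add_left_cancel hg
  have hmod : n ∣ D k - D 0 := by
    have := (ZMod.natCast_eq_natCast_iff _ _ _).mp hgk
    exact (Nat.modEq_iff_dvd' (hmono (Nat.zero_le k))).mp this.symm
  have hDn : D n = D 0 + n := Dfun_n n c b₁
  have hle : D k ≤ D 0 + n := by
    have := hmono (Nat.le_of_lt hkn)
    omega
  have hD01 : D 0 < D 1 := by
    have h := (black_iff n c h1 h2 b₁ 0).mp (by rwa [hD0])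
    exact h
  rcases Nat.eq_zero_or_pos (D k - D 0) with hzero | hpos
  · -- D k = D 0 : then k = 0
    rcases Nat.eq_zero_or_pos k with hk0 | hk1
    · rw [hb2, hk0]; simp
    · exfalso
      have : D 1 ≤ D k := hmono hk1
      omega
  · -- D k = D 0 + n : then b₂ is red, contradiction
    exfalso
    have hn' : n ≤ D k - D 0 := Nat.le_of_dvd hpos hmod
    have hDk : D k = D 0 + n := by omega
    have hk1n : k + 1 ≤ n := hkn
    have h1' : D (k + 1) ≤ D 0 + n := by
      have := hmono hk1n
      omega
    have h2' : D k ≤ D (k + 1) := hmono (Nat.le_succ k)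
    have : ¬ (D k < D (k + 1)) := by omega
    have hb2' := (black_iff n c h1 h2 b₁ k).not.mpr this
    rw [← hb2] at hb2'
    exact hb2' hb₂

/-- Every nonempty fiber of γ contains exactly one black vertex. -/
theorem stmt9 (n : ℕ) (hn : 1 ≤ n) (c : ZMod n → ℕ)
    (h1 : ∀ a, 1 ≤ c a) (h2 : ∀ a, c a ≤ c (a + 1) + 1)
    (y : ZMod n) (hy : (gam n c ⁻¹' {y}).Nonempty) :
    ∃! a : ZMod n, gam n c a = y ∧ c (a + 1) ≠ c a - 1 := by
  haveI : NeZero n := ⟨by omega⟩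
  obtain ⟨a, ha⟩ := hy
  simp only [Set.mem_preimage, Set.mem_singleton_iff] at ha
  set D := Dfun n c a with hDdef
  have hmono : Monotone D := Dfun_mono n c h2 a
  have hD0 : a + ((0 : ℕ) : ZMod n) = a := by simp
  -- find the largest j ≤ n with D j = D 0
  set P : ℕ → Prop := fun j => D j = D 0 with hP
  have hP0 : P 0 := rfl
  set j₀ : ℕ := Nat.findGreatest P n with hj₀
  have hspec : P j₀ := Nat.findGreatest_spec (Nat.zero_le n) hP0
  have hj₀n : j₀ ≤ n := Nat.findGreatest_le n
  have hDn : D n = D 0 + n := Dfun_n n c a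
  have hj₀lt : j₀ < n := by
    by_contra h
    push_neg at h
    have hjn : j₀ = n := le_antisymm hj₀n h
    have hs : D j₀ = D 0 := hspec
    rw [hjn] at hs
    omega
  have hnext : D j₀ < D (j₀ + 1) := by
    rcases Nat.lt_or_ge (D j₀) (D (j₀ + 1)) with h | h
    · exact h
    · exfalso
      have heq : P (j₀ + 1) := by
        show D (j₀ + 1) = D 0
        have hm := hmono (by omega : j₀ ≤ j₀ + 1)
        have hs : D j₀ = D 0 := hspec
        omega
      have := Nat.le_findGreatest (P := P) (by omega : j₀ + 1 ≤ n) heq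
      rw [← hj₀] at this
      omega
  refine ⟨a + (j₀ : ZMod n), ⟨?_, ?_⟩, ?_⟩
  · rw [gam_Dfun n c a j₀]
    have hs : D j₀ = D 0 := hspec
    rw [hDdef] at hs
    rw [hs]
    have := gam_Dfun n c a 0
    rw [hD0] at this
    rw [← this, ha]
  · exact (black_iff n c h1 h2 a j₀).mpr hnext
  · intro b ⟨hbg, hbb⟩
    have hwg : gam n c (a + (j₀ : ZMod n)) = y := by
      rw [gam_Dfun n c a j₀]
      have hs : D j₀ = D 0 := hspec
      rw [hDdef] at hs
      rw [hs]
      have := gam_Dfun n c a 0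
      rw [hD0] at this
      rw [← this, ha]
    have hwb : c (a + (j₀ : ZMod n) + 1) ≠ c (a + (j₀ : ZMod n)) - 1 :=
      (black_iff n c h1 h2 a j₀).mpr hnext
    exact uniq_black n hn c h1 h2 b (a + (j₀ : ZMod n)) hbb hwb
      (by rw [hwg, hbg])
end

section
/- Let n ≥ 1 and c : ZMod n → ℕ satisfy c(a) ≥ 1 and c(a+1) + 1 ≥ c(a) for all a, and define γ(a) = a + c(a). Suppose every a ∈ ZMod n is a periodic point of γ (equivalently, γ is a bijection). Then there are no red vertices: c(a+1) ≠ c(a) - 1 for all a, and moreover γ is a bijection if and only if c(a+1) ≥ c(a) for all a. -/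
/-- If every vertex is cyclic then there are no red vertices; moreover γ is a
bijection iff the Kupisch series is weakly increasing. -/
theorem stmt15 (n : ℕ) (hn : 1 ≤ n) (c : ZMod n → ℕ)
    (h1 : ∀ a, 1 ≤ c a) (h2 : ∀ a, c a ≤ c (a + 1) + 1) :
    ((∀ a : ZMod n, a ∈ Function.periodicPts (gam n c)) →
        ∀ a : ZMod n, c (a + 1) ≠ c a - 1) ∧
      (Function.Bijective (gam n c) ↔ ∀ a : ZMod n, c a ≤ c (a + 1)) := by
  haveI : NeZero n := ⟨by omega⟩
  -- forward direction of the iff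
  have fwd : Function.Bijective (gam n c) → ∀ a : ZMod n, c a ≤ c (a + 1) := by
    intro hb a
    by_contra hlt
    push_neg at hlt
    have heq : c a = c (a + 1) + 1 := by have := h2 a; omega
    have hg : gam n c (a + 1) = gam n c a := by
      simp only [gam, heq]
      push_cast
      ring
    have h01 : a + 1 = a := hb.1 hg
    rw [h01] at hlt
    omega
  -- backward direction of the iff
  have bwd : (∀ a : ZMod n, c a ≤ c (a + 1)) → Function.Bijective (gam n c) := by
    intro hmono
    -- c is monotone along any number of steps
    have step : ∀ (a : ZMod n) (k : ℕ), c a ≤ c (a + (k : ZMod n)) := by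
      intro a k
      induction k with
      | zero => simp
      | succ m ih =>
        calc c a ≤ c (a + (m : ZMod n)) := ih
          _ ≤ c (a + (m : ZMod n) + 1) := hmono _
          _ = c (a + ((m + 1 : ℕ) : ZMod n)) := by push_cast; ring_nf
    -- hence c is constant on each "successor chain", i.e. c (a+1) = c a
    have heq1 : ∀ a : ZMod n, c (a + 1) = c a := by
      intro a
      have h1' : c (a + 1) ≤ c (a + 1 + ((n - 1 : ℕ) : ZMod n)) := step _ _
      have hcast : a + 1 + ((n - 1 : ℕ) : ZMod n) = a := by
        have : (1 : ZMod n) + ((n - 1 : ℕ) : ZMod n) = ((n : ℕ) : ZMod n) := by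
          push_cast [Nat.cast_sub hn]
          ring
        rw [add_assoc, this, ZMod.natCast_self, add_zero]
      rw [hcast] at h1'
      exact le_antisymm h1' (hmono a)
    -- so c is constant everywhere
    have hconst : ∀ a b : ZMod n, c a = c b := by
      have hk : ∀ (a : ZMod n) (k : ℕ), c (a + (k : ZMod n)) = c a := by
        intro a k
        induction k with
        | zero => simp
        | succ m ih =>
          have : a + ((m + 1 : ℕ) : ZMod n) = (a + (m : ZMod n)) + 1 := by
            push_cast; ring
          rw [this, heq1, ih]
      intro a b
      have : b = a + (((b - a).val : ℕ) : ZMod n) := by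
        rw [ZMod.natCast_val, ZMod.cast_id]
        ring
      rw [this, hk]
    -- injectivity, hence bijectivity
    rw [← Finite.injective_iff_bijective]
    intro a b hab
    simp only [gam] at hab
    rw [hconst a b] at hab
    exact add_right_cancel hab
  refine ⟨?_, fwd, bwd⟩
  -- periodic points give surjectivity, then apply fwd
  intro hper a
  have hb : Function.Bijective (gam n c) := by
    rw [← Finite.surjective_iff_bijective]
    intro b
    obtain ⟨k, hk, hkp⟩ := hper b
    refine ⟨(gam n c)^[k - 1] b, ?_⟩
    have hkk : (gam n c)^[(k - 1) + 1] b = b := by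
      rw [Nat.sub_add_cancel hk]; exact hkp
    rw [Function.iterate_succ', Function.comp_apply] at hkk
    exact hkk
  have := fwd hb a
  have := h1 a
  omega
end
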